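/- arXiv:1901.11224 — 2 statements merged into one kernel-verified Lean document; each statement's English description precedes it below -/
import Mathlib

section
/- The function f_Nc(x; m) := (1/4)·Q(x; 1, 2m-1, 1) on ℝ^{2m-1} is (0, 1)-smooth (convex and 1-smooth), and its optimal solution set X* satisfies dist²(0, X*) ≤ 2m/3. -/
open scoped RealInnerProductSpace BigOperators

/-- Nesterov's chain quadratic `Q(x; ξ, m, ζ)` on `ℝ^{n+1}` (so `m = n+1 ≥ 1`). -/
noncomputable def Qfun {n : ℕ} (ξ ζ : ℝ) (x : EuclideanSpace ℝ (Fin (n + 1))) : ℝ :=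
  ξ / 2 * (x 0 - 1) ^ 2 + 1 / 2 * ∑ t : Fin n, (x t.succ - x t.castSucc) ^ 2
    + ζ / 2 * (x (Fin.last n)) ^ 2

/-- Nesterov's convex hard function `f_Nc(x; m) = (1/4)Q(x; 1, 2m-1, 1)` on `ℝ^{2m-1}`. -/
noncomputable def fNc (m : ℕ) (x : EuclideanSpace ℝ (Fin (2 * m - 2 + 1))) : ℝ :=
  1 / 4 * Qfun 1 1 x

/-!
`Q` is a quadratic polynomial, so `Q(y + v) = Q(y) + Q'(y)v + q(v)` exactly, where `q` is its
quadratic part `ξ/2 v₁² + 1/2 Σ (v_{t+1} - v_t)² + ζ/2 v_m²`. Hence the Bregman divergence of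
`f_Nc` is `q(x - y)/4`, which lies between `0` and `‖x - y‖²/2` because
`(a - b)² ≤ 2a² + 2b²`. The point `x*_i = 1 - i/(2m)` has constant increments, so `Q'(x*)v`
telescopes to `0` and `x*` is a minimiser; its squared norm is a sum of squares with a closed form.
-/

open Finset

theorem inner_gradient_eq_of_hasLineDerivAt {F : Type*} [NormedAddCommGroup F]
    [InnerProductSpace ℝ F] [CompleteSpace F] {f : F → ℝ} {y v : F} {c : ℝ}
    (hf : DifferentiableAt ℝ f y) (h : HasLineDerivAt ℝ f c y v) : ⟪gradient f y, v⟫ = c := by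
  rw [inner_gradient_left, ← hf.lineDeriv_eq_fderiv, h.lineDeriv]

theorem sum_range_one_sub_mul_sq (c : ℝ) (N : ℕ) :
    ∑ i ∈ range N, (1 - (i + 1) * c) ^ 2
      = N - N * (N + 1) * c + N * (N + 1) * (2 * N + 1) / 6 * c ^ 2 := by
  induction N with
  | zero => simp
  | succ N ih => rw [sum_range_succ, ih]; push_cast; ring

noncomputable def QfunDeriv {n : ℕ} (ξ ζ : ℝ) (y v : EuclideanSpace ℝ (Fin (n + 1))) : ℝ :=
  ξ * (y 0 - 1) * v 0 + ∑ t : Fin n, (y t.succ - y t.castSucc) * (v t.succ - v t.castSucc)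
    + ζ * y (Fin.last n) * v (Fin.last n)

noncomputable def QfunQuad {n : ℕ} (ξ ζ : ℝ) (v : EuclideanSpace ℝ (Fin (n + 1))) : ℝ :=
  ξ / 2 * v 0 ^ 2 + 1 / 2 * ∑ t : Fin n, (v t.succ - v t.castSucc) ^ 2
    + ζ / 2 * v (Fin.last n) ^ 2

section Qfun

variable {n : ℕ} {ξ ζ : ℝ}

theorem Qfun_add (y v : EuclideanSpace ℝ (Fin (n + 1))) :
    Qfun ξ ζ (y + v) = Qfun ξ ζ y + QfunDeriv ξ ζ y v + QfunQuad ξ ζ v := by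
  have hsum : ∑ t : Fin n, ((y + v) t.succ - (y + v) t.castSucc) ^ 2
      = ∑ t : Fin n, (y t.succ - y t.castSucc) ^ 2
        + 2 * ∑ t : Fin n, (y t.succ - y t.castSucc) * (v t.succ - v t.castSucc)
        + ∑ t : Fin n, (v t.succ - v t.castSucc) ^ 2 := by
    rw [mul_sum, ← sum_add_distrib, ← sum_add_distrib]
    exact sum_congr rfl fun t _ => by simp only [PiLp.add_apply]; ring
  simp only [Qfun, QfunDeriv, QfunQuad]
  rw [hsum]
  simp only [PiLp.add_apply]
  ring

theorem QfunDeriv_smul (c : ℝ) (y v : EuclideanSpace ℝ (Fin (n + 1))) :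
    QfunDeriv ξ ζ y (c • v) = c * QfunDeriv ξ ζ y v := by
  simp only [QfunDeriv, PiLp.smul_apply, smul_eq_mul, mul_add, mul_sum]
  ring_nf

theorem QfunQuad_smul (c : ℝ) (v : EuclideanSpace ℝ (Fin (n + 1))) :
    QfunQuad ξ ζ (c • v) = c ^ 2 * QfunQuad ξ ζ v := by
  simp only [QfunQuad, PiLp.smul_apply, smul_eq_mul, mul_add, mul_sum]
  ring_nf

theorem hasLineDerivAt_Qfun (y v : EuclideanSpace ℝ (Fin (n + 1))) :
    HasLineDerivAt ℝ (Qfun ξ ζ) (QfunDeriv ξ ζ y v) y v := by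
  have hline : (fun t : ℝ => Qfun ξ ζ (y + t • v))
      = fun t => Qfun ξ ζ y + t * QfunDeriv ξ ζ y v + t ^ 2 * QfunQuad ξ ζ v := by
    ext t
    rw [Qfun_add, QfunDeriv_smul, QfunQuad_smul]
  unfold HasLineDerivAt
  rw [hline]
  simpa using (((hasDerivAt_id (0 : ℝ)).mul_const (QfunDeriv ξ ζ y v)).const_add
    (Qfun ξ ζ y)).fun_add ((hasDerivAt_pow 2 (0 : ℝ)).mul_const (QfunQuad ξ ζ v))

theorem differentiable_Qfun : Differentiable ℝ (Qfun (n := n) ξ ζ) := by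
  unfold Qfun
  fun_prop

theorem QfunQuad_nonneg (hξ : 0 ≤ ξ) (hζ : 0 ≤ ζ) (v : EuclideanSpace ℝ (Fin (n + 1))) :
    0 ≤ QfunQuad ξ ζ v := by
  unfold QfunQuad
  positivity

theorem QfunQuad_le (hξ : ξ ≤ 2) (hζ : ζ ≤ 2) (v : EuclideanSpace ℝ (Fin (n + 1))) :
    QfunQuad ξ ζ v ≤ 2 * ‖v‖ ^ 2 := by
  have hdiff : ∑ t : Fin n, (v t.succ - v t.castSucc) ^ 2
      ≤ 2 * ∑ t : Fin n, v t.succ ^ 2 + 2 * ∑ t : Fin n, v t.castSucc ^ 2 := by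
    rw [mul_sum, mul_sum, ← sum_add_distrib]
    exact sum_le_sum fun t _ => by nlinarith [sq_nonneg (v t.succ + v t.castSucc)]
  have hfirst : ‖v‖ ^ 2 = v 0 ^ 2 + ∑ t : Fin n, v t.succ ^ 2 := by
    rw [EuclideanSpace.real_norm_sq_eq, Fin.sum_univ_succ]
  have hlast : ‖v‖ ^ 2 = ∑ t : Fin n, v t.castSucc ^ 2 + v (Fin.last n) ^ 2 := by
    rw [EuclideanSpace.real_norm_sq_eq, Fin.sum_univ_castSucc]
  unfold QfunQuad
  nlinarith [sq_nonneg (v 0), sq_nonneg (v (Fin.last n))]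

theorem Qfun_le_of_QfunDeriv_eq_zero (hξ : 0 ≤ ξ) (hζ : 0 ≤ ζ)
    {y : EuclideanSpace ℝ (Fin (n + 1))} (hy : ∀ v, QfunDeriv ξ ζ y v = 0)
    (x : EuclideanSpace ℝ (Fin (n + 1))) : Qfun ξ ζ y ≤ Qfun ξ ζ x := by
  have htaylor := Qfun_add (ξ := ξ) (ζ := ζ) y (x - y)
  rw [add_sub_cancel, hy] at htaylor
  linarith [QfunQuad_nonneg hξ hζ (x - y)]

end Qfun

theorem fNc_bregman_eq (m : ℕ) (x y : EuclideanSpace ℝ (Fin (2 * m - 2 + 1))) :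
    fNc m x - fNc m y - ⟪gradient (fNc m) y, x - y⟫ = 1 / 4 * QfunQuad 1 1 (x - y) := by
  have hgrad : ⟪gradient (fNc m) y, x - y⟫ = 1 / 4 * QfunDeriv 1 1 y (x - y) :=
    inner_gradient_eq_of_hasLineDerivAt (differentiable_Qfun.const_mul _ y)
      ((hasLineDerivAt_Qfun y (x - y)).const_mul _)
  have htaylor := Qfun_add (ξ := 1) (ζ := 1) y (x - y)
  rw [add_sub_cancel] at htaylor
  rw [hgrad, fNc, fNc, htaylor]
  ring

/-- Indices are `0`-based: coordinate `i` is the paper's `x*_{i+1} = 1 - (i+1)/(2m)`, where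
`n + 2 = 2m`. -/
noncomputable def QfunArgmin (n : ℕ) : EuclideanSpace ℝ (Fin (n + 1)) :=
  WithLp.toLp 2 fun i => 1 - ((i : ℝ) + 1) / (n + 2)

theorem QfunDeriv_QfunArgmin (n : ℕ) (v : EuclideanSpace ℝ (Fin (n + 1))) :
    QfunDeriv 1 1 (QfunArgmin n) v = 0 := by
  have hstep : ∀ t : Fin n, QfunArgmin n t.succ - QfunArgmin n t.castSucc = -1 / (n + 2) := by
    intro t
    simp only [QfunArgmin, PiLp.toLp_apply, Fin.val_succ, Fin.val_castSucc]
    field_simp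
    push_cast
    ring
  have htelescope : ∑ t : Fin n, (v t.succ - v t.castSucc) = v (Fin.last n) - v 0 := by
    have hfirst := Fin.sum_univ_succ (fun i => v i)
    have hlast := Fin.sum_univ_castSucc (fun i => v i)
    rw [sum_sub_distrib]
    linarith
  simp only [QfunDeriv, hstep, ← mul_sum, htelescope]
  simp only [QfunArgmin, PiLp.toLp_apply, Fin.val_zero, Fin.val_last]
  field_simp
  push_cast
  ring

theorem norm_sq_QfunArgmin_le (n : ℕ) : ‖QfunArgmin n‖ ^ 2 ≤ (n + 2) / 3 := by
  have hsum : ‖QfunArgmin n‖ ^ 2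
      = ∑ i ∈ range (n + 1), (1 - (i + 1) * (1 / ((n : ℝ) + 2))) ^ 2 := by
    rw [EuclideanSpace.real_norm_sq_eq, ← Fin.sum_univ_eq_sum_range]
    simp only [QfunArgmin, PiLp.toLp_apply, mul_one_div]
  have hclosed : ‖QfunArgmin n‖ ^ 2 = (n + 1) * (2 * n + 3) / (6 * (n + 2)) := by
    rw [hsum, sum_range_one_sub_mul_sq]
    field_simp
    push_cast
    ring
  rw [hclosed, div_le_div_iff₀ (by positivity) (by norm_num)]
  nlinarith

/-- `f_Nc(·; m)` is `(0,1)`-smooth (convex and `1`-smooth) and the distance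
from `0` to its optimal solution set `X*` satisfies `dist²(0, X*) ≤ 2m/3`. -/
theorem fNc_smooth_and_dist_bound (m : ℕ) (hm : 1 ≤ m) :
    (∀ x y : EuclideanSpace ℝ (Fin (2 * m - 2 + 1)),
      0 ≤ fNc m x - fNc m y - ⟪gradient (fNc m) y, x - y⟫ ∧
        fNc m x - fNc m y - ⟪gradient (fNc m) y, x - y⟫ ≤ 1 / 2 * ‖x - y‖ ^ 2) ∧
      Metric.infDist (0 : EuclideanSpace ℝ (Fin (2 * m - 2 + 1)))
          {z : EuclideanSpace ℝ (Fin (2 * m - 2 + 1)) | ∀ w, fNc m z ≤ fNc m w} ^ 2 ≤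
        2 * m / 3 := by
  refine ⟨fun x y => ?_, ?_⟩
  · rw [fNc_bregman_eq]
    exact ⟨mul_nonneg (by norm_num) (QfunQuad_nonneg zero_le_one zero_le_one _),
      by linarith [QfunQuad_le (ξ := 1) (ζ := 1) one_le_two one_le_two (x - y)]⟩
  · have hmin : QfunArgmin (2 * m - 2) ∈ {z | ∀ w, fNc m z ≤ fNc m w} := fun w =>
      mul_le_mul_of_nonneg_left
        (Qfun_le_of_QfunDeriv_eq_zero zero_le_one zero_le_one (QfunDeriv_QfunArgmin _) w)
        (by norm_num)
    have hdim : ((2 * m - 2 : ℕ) : ℝ) + 2 = 2 * m := by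
      rw [Nat.cast_sub (by omega)]
      push_cast
      ring
    calc _ ≤ ‖QfunArgmin (2 * m - 2)‖ ^ 2 := by
          gcongr
          · exact Metric.infDist_nonneg
          · simpa using Metric.infDist_le_dist_of_mem (x := 0) hmin
      _ ≤ ((2 * m - 2 : ℕ) + 2) / 3 := norm_sq_QfunArgmin_le _
      _ = 2 * m / 3 := by rw [hdim]
end

section
/- Under the hypotheses of the orthogonal embedding construction (g (ξ,ζ)-smooth, twice differentiable, U^{(i)} with mutually orthogonal orthonormal rows, ḡ_i(x) = √n·g(U^{(i)}x)), the average Ḡ(x) := (1/n)∑_{i=1}^n ḡ_i(x) is (ξ/√n, ζ)-smooth on ℝ^{mn}. -/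
open scoped RealInnerProductSpace BigOperators

/-!
The Bregman divergence of `Ḡ` at `(x, y)` is `1/√n` times the sum over `i` of the Bregman
divergences of `g` at `(U⁽ⁱ⁾x, U⁽ⁱ⁾y)`. The rows of all the `U⁽ⁱ⁾` together are `mn` orthonormal
vectors of `ℝ^{mn}`, hence an orthonormal basis, so Parseval gives `∑ᵢ ‖U⁽ⁱ⁾v‖² = ‖v‖²` and the
bounds for `g` add up to `(ξ/√n, ζ/√n)`-bounds for `Ḡ`; finally `ζ/√n ≤ ζ` as `ζ ≥ |ξ| ≥ 0`.
-/

open Module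

section Parseval

variable {E : Type*} [NormedAddCommGroup E] [InnerProductSpace ℝ E] {ι κ : Type*}

theorem Orthonormal.sum_sq_inner_of_card_eq_finrank [Fintype ι] [FiniteDimensional ℝ E]
    {v : ι → E} (hv : Orthonormal ℝ v) (hcard : Fintype.card ι = finrank ℝ E) (x : E) :
    ∑ i, ⟪v i, x⟫ ^ 2 = ‖x‖ ^ 2 := by
  have hspan := hv.linearIndependent.span_eq_top_of_card_eq_finrank' hcard
  simpa only [OrthonormalBasis.coe_mk] using
    (OrthonormalBasis.mk hv hspan.ge).sum_sq_inner_right x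

/-- The analysis operator `x ↦ (⟪v a, x⟫)ₐ` of the family `v`; for `v = u i` it is `U⁽ⁱ⁾`. -/
noncomputable def analysisOp [Fintype κ] (v : κ → E) : E →L[ℝ] EuclideanSpace ℝ κ :=
  (EuclideanSpace.equiv κ ℝ).symm.toContinuousLinearMap ∘L
    ContinuousLinearMap.pi fun a => innerSL ℝ (v a)

@[simp]
theorem analysisOp_apply [Fintype κ] (v : κ → E) (x : E) :
    analysisOp v x = WithLp.toLp 2 (fun a => ⟪v a, x⟫) := rfl

theorem sum_norm_sq_analysisOp [Fintype ι] [Fintype κ] [FiniteDimensional ℝ E] {u : ι → κ → E}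
    (hu : Orthonormal ℝ fun p : ι × κ => u p.1 p.2)
    (hcard : Fintype.card (ι × κ) = finrank ℝ E) (x : E) :
    ∑ i, ‖analysisOp (u i) x‖ ^ 2 = ‖x‖ ^ 2 := by
  rw [← hu.sum_sq_inner_of_card_eq_finrank hcard x, Fintype.sum_prod_type]
  simp [EuclideanSpace.norm_sq_eq]

end Parseval

section Bregman

variable {E F : Type*} [NormedAddCommGroup E] [InnerProductSpace ℝ E] [CompleteSpace E]
  [NormedAddCommGroup F] [InnerProductSpace ℝ F] [CompleteSpace F]

noncomputable def bregman (f : E → ℝ) (x y : E) : ℝ := f x - f y - ⟪gradient f y, x - y⟫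

theorem bregman_eq_fderiv (f : E → ℝ) (x y : E) :
    bregman f x y = f x - f y - fderiv ℝ f y (x - y) := by
  rw [bregman, inner_gradient_left]

theorem bregman_const_mul {f : E → ℝ} {y : E} (hf : DifferentiableAt ℝ f y) (c : ℝ) (x : E) :
    bregman (fun z => c * f z) x y = c * bregman f x y := by
  simp only [bregman_eq_fderiv, fderiv_const_mul hf, _root_.smul_apply, smul_eq_mul]
  ring

theorem bregman_sum {ι : Type*} {s : Finset ι} {f : ι → E → ℝ} {y : E}
    (hf : ∀ i ∈ s, DifferentiableAt ℝ (f i) y) (x : E) :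
    bregman (fun z => ∑ i ∈ s, f i z) x y = ∑ i ∈ s, bregman (f i) x y := by
  simp only [bregman_eq_fderiv, fderiv_fun_sum hf, _root_.sum_apply,
    Finset.sum_sub_distrib]

theorem bregman_comp_clm {g : F → ℝ} (P : E →L[ℝ] F) {y : E} (hg : DifferentiableAt ℝ g (P y))
    (x : E) : bregman (fun z => g (P z)) x y = bregman g (P x) (P y) := by
  simp only [bregman_eq_fderiv, fderiv_fun_comp y hg P.differentiableAt, P.fderiv,
    ContinuousLinearMap.comp_apply, map_sub]

/-- `(ξ, ζ)`-smoothness in first-order form; for `C²` functions it is `ξ • 1 ≤ ∇²f ≤ ζ • 1`. -/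
def BregmanBounded (ξ ζ : ℝ) (f : E → ℝ) : Prop :=
  ∀ x y, ξ / 2 * ‖x - y‖ ^ 2 ≤ bregman f x y ∧ bregman f x y ≤ ζ / 2 * ‖x - y‖ ^ 2

namespace BregmanBounded

variable {ξ ζ : ℝ}

theorem mono {f : E → ℝ} (h : BregmanBounded ξ ζ f) {ξ' ζ' : ℝ} (hξ : ξ' ≤ ξ) (hζ : ζ ≤ ζ') :
    BregmanBounded ξ' ζ' f := fun x y =>
  ⟨le_trans (by gcongr) (h x y).1, (h x y).2.trans (by gcongr)⟩

theorem const_mul {f : E → ℝ} (h : BregmanBounded ξ ζ f) (hf : Differentiable ℝ f) {c : ℝ}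
    (hc : 0 ≤ c) : BregmanBounded (c * ξ) (c * ζ) fun z => c * f z := fun x y => by
  rw [bregman_const_mul (hf y), mul_div_assoc, mul_assoc, mul_div_assoc, mul_assoc]
  exact ⟨mul_le_mul_of_nonneg_left (h x y).1 hc, mul_le_mul_of_nonneg_left (h x y).2 hc⟩

theorem sum_comp {ι : Type*} [Fintype ι] {g : F → ℝ} (h : BregmanBounded ξ ζ g)
    (hg : Differentiable ℝ g) {P : ι → E →L[ℝ] F} (hP : ∀ v, ∑ i, ‖P i v‖ ^ 2 = ‖v‖ ^ 2) :
    BregmanBounded ξ ζ fun z => ∑ i, g (P i z) := fun x y => by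
  have hsplit : bregman (fun z => ∑ i, g (P i z)) x y = ∑ i, bregman g (P i x) (P i y) := by
    rw [bregman_sum (f := fun i z => g (P i z)) fun i _ => ((hg _).comp y (P i).differentiableAt)]
    exact Finset.sum_congr rfl fun i _ => bregman_comp_clm (P i) (hg _) x
  have hnorm : ‖x - y‖ ^ 2 = ∑ i, ‖P i x - P i y‖ ^ 2 := by
    simp only [← map_sub, hP]
  rw [hsplit, hnorm, Finset.mul_sum, Finset.mul_sum]
  exact ⟨Finset.sum_le_sum fun i _ => (h _ _).1, Finset.sum_le_sum fun i _ => (h _ _).2⟩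

end BregmanBounded

end Bregman

/-- if `g` is twice differentiable and `(ξ, ζ)`-smooth with `|ξ| ≤ ζ`, and
the matrices `U^{(i)}` (given by their rows `u i a ∈ ℝ^{mn}`) have mutually orthogonal
orthonormal rows, then `Ḡ(x) = (1/n)∑ᵢ √n·g(U^{(i)}x)` is `(ξ/√n, ζ)`-smooth. -/
theorem orthogonal_embedding_average_function_smooth (m n : ℕ) (hn : 0 < n) (ξ ζ : ℝ)
    (hξζ : |ξ| ≤ ζ)
    (g : EuclideanSpace ℝ (Fin m) → ℝ) (hg : ContDiff ℝ 2 g)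
    (hsmooth : ∀ x y : EuclideanSpace ℝ (Fin m),
      ξ / 2 * ‖x - y‖ ^ 2 ≤ g x - g y - ⟪gradient g y, x - y⟫ ∧
        g x - g y - ⟪gradient g y, x - y⟫ ≤ ζ / 2 * ‖x - y‖ ^ 2)
    (u : Fin n → Fin m → EuclideanSpace ℝ (Fin (m * n)))
    (hU : ∀ (i j : Fin n) (a b : Fin m),
      ⟪u i a, u j b⟫ = if i = j ∧ a = b then (1 : ℝ) else 0)
    (x y : EuclideanSpace ℝ (Fin (m * n))) :
    ξ / Real.sqrt n / 2 * ‖x - y‖ ^ 2 ≤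
        ((1 / (n : ℝ)) * ∑ i : Fin n,
            Real.sqrt n * g (WithLp.toLp 2 (fun a => ⟪u i a, x⟫) : EuclideanSpace ℝ (Fin m)))
          - ((1 / (n : ℝ)) * ∑ i : Fin n,
            Real.sqrt n * g (WithLp.toLp 2 (fun a => ⟪u i a, y⟫) : EuclideanSpace ℝ (Fin m)))
          - ⟪gradient (fun z : EuclideanSpace ℝ (Fin (m * n)) =>
              (1 / (n : ℝ)) * ∑ i : Fin n,
                Real.sqrt n * g (WithLp.toLp 2 (fun a => ⟪u i a, z⟫) : EuclideanSpace ℝ (Fin m))) y,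
            x - y⟫ ∧
      ((1 / (n : ℝ)) * ∑ i : Fin n,
            Real.sqrt n * g (WithLp.toLp 2 (fun a => ⟪u i a, x⟫) : EuclideanSpace ℝ (Fin m)))
          - ((1 / (n : ℝ)) * ∑ i : Fin n,
            Real.sqrt n * g (WithLp.toLp 2 (fun a => ⟪u i a, y⟫) : EuclideanSpace ℝ (Fin m)))
          - ⟪gradient (fun z : EuclideanSpace ℝ (Fin (m * n)) =>
              (1 / (n : ℝ)) * ∑ i : Fin n,
                Real.sqrt n * g (WithLp.toLp 2 (fun a => ⟪u i a, z⟫) : EuclideanSpace ℝ (Fin m))) y,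
            x - y⟫ ≤ ζ / 2 * ‖x - y‖ ^ 2 := by
  have hgd : Differentiable ℝ g := hg.differentiable (by norm_num)
  have hg_bd : BregmanBounded ξ ζ g := hsmooth
  have hu : Orthonormal ℝ fun p : Fin n × Fin m => u p.1 p.2 := by
    simp only [orthonormal_iff_ite, hU, Prod.ext_iff, implies_true]
  have hframe := sum_norm_sq_analysisOp hu (by simp [mul_comm])
  have hG := ((hg_bd.const_mul hgd (Real.sqrt_nonneg n)).sum_comp (hgd.const_mul _)
    hframe).const_mul (by fun_prop) (one_div_nonneg.2 n.cast_nonneg)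
  have hsqrt : 1 ≤ Real.sqrt n := Real.one_le_sqrt.2 (by exact_mod_cast hn)
  have hscale (a : ℝ) : 1 / (n : ℝ) * (Real.sqrt n * a) = a / Real.sqrt n := by
    rw [← mul_assoc, one_div_mul_eq_div, Real.sqrt_div_self, inv_mul_eq_div]
  have hζ : 0 ≤ ζ := (abs_nonneg ξ).trans hξζ
  rw [hscale, hscale] at hG
  exact hG.mono le_rfl (div_le_self hζ hsqrt) x y
end
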